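/- Let G ≤ Aut T be a self-similar fractal group and let σ be a d-cycle in the symmetric group on X. If for each g ∈ G the label of g at the root is a power of σ (i.e., g_(∅) = σ^k for some k ∈ ℕ), then G is strongly fractal. -/

import Mathlib

open Equiv

namespace TreeFract

variable {X : Type*}

/-- The automorphism group of the rooted `d`-adic tree with vertex set the free
monoid `List X`: permutations of the vertex set fixing the root and sending
children of a vertex to children of its image (this is exactly incidence
preservation for the rooted tree). -/
def AutT (X : Type*) : Subgroup (Equiv.Perm (List X)) where
  carrier := {g | g [] = [] ∧ ∀ (u : List X) (x : X), ∃ y : X, g (u ++ [x]) = g u ++ [y]}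
  one_mem' := ⟨rfl, fun _ x => ⟨x, rfl⟩⟩
  mul_mem' := by
    rintro f g ⟨hf1, hf2⟩ ⟨hg1, hg2⟩
    refine ⟨?_, fun u x => ?_⟩
    · show f (g []) = []
      rw [hg1, hf1]
    · obtain ⟨y, hy⟩ := hg2 u x
      obtain ⟨z, hz⟩ := hf2 (g u) y
      exact ⟨z, by show f (g (u ++ [x])) = f (g u) ++ [z]; rw [hy, hz]⟩
  inv_mem' := by
    rintro g ⟨hg1, hg2⟩
    have hinj := g.injective
    refine ⟨?_, fun u x => ?_⟩
    · apply hinj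
      show g (g⁻¹ []) = g []
      rw [← Equiv.Perm.mul_apply, mul_inv_cancel, Equiv.Perm.one_apply, hg1]
    · have hne : g⁻¹ (u ++ [x]) ≠ [] := by
        intro h
        have h2 : u ++ [x] = g [] := by
          conv_lhs => rw [← Equiv.Perm.one_apply (u ++ [x]), ← mul_inv_cancel g, Equiv.Perm.mul_apply, h]
        rw [hg1] at h2
        simp at h2
      obtain ⟨y, hy⟩ : ∃ y, g⁻¹ (u ++ [x]) = (g⁻¹ (u ++ [x])).dropLast ++ [y] :=
        ⟨(g⁻¹ (u ++ [x])).getLast hne, (List.dropLast_append_getLast hne).symm⟩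
      obtain ⟨z, hz⟩ := hg2 ((g⁻¹ (u ++ [x])).dropLast) y
      have happ : g ((g⁻¹ (u ++ [x])).dropLast) ++ [z] = u ++ [x] := by
        rw [← hz, ← hy, ← Equiv.Perm.mul_apply, mul_inv_cancel, Equiv.Perm.one_apply]
      have h2 : g ((g⁻¹ (u ++ [x])).dropLast) = u ∧ ([z] : List X) = [x] :=
        List.append_inj' happ rfl
      refine ⟨y, ?_⟩
      rw [hy]
      congr 1
      apply hinj
      rw [← Equiv.Perm.mul_apply, mul_inv_cancel, Equiv.Perm.one_apply, h2.1]

/-- The underlying function of the section of `g` at the vertex `u`. -/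
def sectFun (g : Equiv.Perm (List X)) (u : List X) : List X → List X :=
  fun v => (g (u ++ v)).drop (g u).length

open scoped Classical in
/-- The section `g_u` of a tree automorphism `g` at a vertex `u`, i.e. the unique
automorphism with `g (u ++ v) = g u ++ g_u v` for all `v`.  (By convention it is
the identity for permutations which are not tree automorphisms.) -/
noncomputable def sect (g : Equiv.Perm (List X)) (u : List X) : Equiv.Perm (List X) :=
  if h : Function.Bijective (sectFun g u) then Equiv.ofBijective _ h else 1

/-- The underlying function of the label of `g` at the vertex `u`. -/
def labelFun (g : Equiv.Perm (List X)) (u : List X) : X → X :=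
  fun x => (g (u ++ [x])).getLastD x

open scoped Classical in
/-- The label `g_(u)` of a tree automorphism `g` at a vertex `u`: the permutation
of `X` with `g (u ++ [x]) = g u ++ [g_(u) x]`.  (By convention it is the identity
for permutations which are not tree automorphisms.) -/
noncomputable def label (g : Equiv.Perm (List X)) (u : List X) : Equiv.Perm X :=
  if h : Function.Bijective (labelFun g u) then Equiv.ofBijective _ h else 1

/-- The stabilizer `st_G(u)` of the vertex `u` in `G`. -/
def stV (G : Subgroup (Equiv.Perm (List X))) (u : List X) : Subgroup (Equiv.Perm (List X)) where
  carrier := {g | g ∈ G ∧ g u = u}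
  one_mem' := ⟨one_mem G, rfl⟩
  mul_mem' := by
    rintro f g ⟨hf, hf2⟩ ⟨hg, hg2⟩
    exact ⟨mul_mem hf hg, by show f (g u) = u; rw [hg2, hf2]⟩
  inv_mem' := by
    rintro g ⟨hg, hg2⟩
    refine ⟨inv_mem hg, ?_⟩
    apply g.injective
    show g (g⁻¹ u) = g u
    rw [← Equiv.Perm.mul_apply, mul_inv_cancel, Equiv.Perm.one_apply, hg2]

/-- The stabilizer `st_G(L_n)` of the `n`-th level in `G`. -/
def stL (G : Subgroup (Equiv.Perm (List X))) (n : ℕ) : Subgroup (Equiv.Perm (List X)) where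
  carrier := {g | g ∈ G ∧ ∀ u : List X, u.length = n → g u = u}
  one_mem' := ⟨one_mem G, fun _ _ => rfl⟩
  mul_mem' := by
    rintro f g ⟨hf, hf2⟩ ⟨hg, hg2⟩
    exact ⟨mul_mem hf hg, fun u hu => by show f (g u) = u; rw [hg2 u hu, hf2 u hu]⟩
  inv_mem' := by
    rintro g ⟨hg, hg2⟩
    refine ⟨inv_mem hg, fun u hu => ?_⟩
    apply g.injective
    show g (g⁻¹ u) = g u
    rw [← Equiv.Perm.mul_apply, mul_inv_cancel, Equiv.Perm.one_apply, hg2 u hu]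

/-- `G` is self-similar: sections of elements of `G` lie in `G`. -/
def SelfSimilar (G : Subgroup (Equiv.Perm (List X))) : Prop :=
  ∀ g ∈ G, ∀ u : List X, sect g u ∈ G

/-- `G` acts transitively on the first level of the tree. -/
def FirstLevelTransitive (G : Subgroup (Equiv.Perm (List X))) : Prop :=
  ∀ x y : X, ∃ g ∈ G, g [x] = [y]

/-- `G` is level transitive: it acts transitively on every level of the tree. -/
def LevelTransitive (G : Subgroup (Equiv.Perm (List X))) : Prop :=
  ∀ (n : ℕ) (u v : List X), u.length = n → v.length = n → ∃ g ∈ G, g u = v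

/-- `G` is fractal: `ψ_u(st_G(u)) = G` for every vertex `u`. -/
def Fractal (G : Subgroup (Equiv.Perm (List X))) : Prop :=
  ∀ u : List X,
    (fun g => sect g u) '' (stV G u : Set (Equiv.Perm (List X))) = (G : Set (Equiv.Perm (List X)))

/-- `G` is strongly fractal: `ψ_x(st_G(L_1)) = G` for every first-level vertex `x`. -/
def StronglyFractal (G : Subgroup (Equiv.Perm (List X))) : Prop :=
  ∀ x : X,
    (fun g => sect g [x]) '' (stL G 1 : Set (Equiv.Perm (List X))) = (G : Set (Equiv.Perm (List X)))

/-- `G` is super strongly fractal: `ψ_u(st_G(L_n)) = G` for every `n` and every `u ∈ L_n`. -/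
def SuperStronglyFractal (G : Subgroup (Equiv.Perm (List X))) : Prop :=
  ∀ (n : ℕ) (u : List X), u.length = n →
    (fun g => sect g u) '' (stL G n : Set (Equiv.Perm (List X))) = (G : Set (Equiv.Perm (List X)))

/-- The normal closure `⟨S⟩^G` of a subset `S ⊆ G` in the subgroup `G`, realized as a
subgroup of the ambient group: the subgroup generated by all `G`-conjugates of `S`. -/
def normalClosureIn (G : Subgroup (Equiv.Perm (List X))) (S : Set (Equiv.Perm (List X))) :
    Subgroup (Equiv.Perm (List X)) :=
  Subgroup.closure {t | ∃ g ∈ G, ∃ s ∈ S, t = g * s * g⁻¹}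

end TreeFract
namespace TreeFract

/-! ### The Hanoi towers generators -/

section Hanoi

variable {d : ℕ}

/-- The underlying function of the automorphism `a_{ij}` of the Hanoi Towers group:
it swaps the first occurrence of `i` or `j` in a word. -/
def hanoiFun (i j : Fin d) : List (Fin d) → List (Fin d)
  | [] => []
  | x :: w => if x = i then j :: w else if x = j then i :: w else x :: hanoiFun i j w

lemma hanoiFun_invol (i j : Fin d) : ∀ w, hanoiFun i j (hanoiFun i j w) = w
  | [] => rfl
  | x :: w => by
    by_cases h1 : x = i
    · subst h1
      by_cases h2 : j = x
      · simp [hanoiFun, h2]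
      · simp [hanoiFun, h2]
    · by_cases h2 : x = j
      · subst h2
        simp [hanoiFun, h1]
      · simp [hanoiFun, h1, h2, hanoiFun_invol i j w]

/-- The automorphism `a_{ij}` of the `d`-adic tree: its label at the root is the
transposition `(x_i x_j)`, its sections at the first-level vertices `x_i` and `x_j`
are trivial and all its other first-level sections equal `a_{ij}` again. -/
def hanoiA (i j : Fin d) : Equiv.Perm (List (Fin d)) :=
  ⟨hanoiFun i j, hanoiFun i j, hanoiFun_invol i j, hanoiFun_invol i j⟩

end Hanoi

/-- The generator `b_i = a_{i,i+1}` (here `i` runs through `0, …, d-2`,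
corresponding to the paper's `b_1, …, b_{d-1}`). -/
def hanoiB (d : ℕ) (i : ℕ) (h : i + 1 < d) : Equiv.Perm (List (Fin d)) :=
  hanoiA ⟨i, Nat.lt_of_succ_lt h⟩ ⟨i + 1, h⟩

/-- The subgroup `G = ⟨b_1, …, b_{d-1}⟩` of the Hanoi Towers group. -/
def hanoiGroup (d : ℕ) : Subgroup (Equiv.Perm (List (Fin d))) :=
  Subgroup.closure {g | ∃ (i : ℕ) (h : i + 1 < d), g = hanoiB d i h}

/-! ### GGS groups (and the rooted automorphism `a`) -/

section GGS

variable {p : ℕ}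

/-- The function adding `m` to the first letter of a word over `ZMod p`. -/
def rotFun (m : ZMod p) : List (ZMod p) → List (ZMod p)
  | [] => []
  | x :: w => (x + m) :: w

/-- The rooted automorphism of the `p`-adic tree whose label at the root is the
`p`-cycle `x ↦ x + m`; for `m = 1` this is the generator `a` of a GGS-group
(identifying `x_i` with `i mod p`). -/
def rotPerm (m : ZMod p) : Equiv.Perm (List (ZMod p)) :=
  ⟨rotFun m, rotFun (-m),
    by intro w; cases w <;> simp [rotFun],
    by intro w; cases w <;> simp [rotFun]⟩

/-- The underlying function of the GGS generator `b` with defining vector `e`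
(the value `e 0` is irrelevant; `e i` for `i ≠ 0` are the coordinates
`e_1, …, e_{p-1}`): `b` fixes the first level, its section at `x_i` is
`a^{e_i}` for `i = 1, …, p-1` and its section at `x_p` (identified with `0`)
is `b` again. -/
def ggsFun (e : ZMod p → ZMod p) : List (ZMod p) → List (ZMod p)
  | [] => []
  | x :: w => if x = 0 then x :: ggsFun e w else x :: rotFun (e x) w

lemma ggsFun_inv (e : ZMod p → ZMod p) : ∀ w, ggsFun (fun i => -(e i)) (ggsFun e w) = w
  | [] => rfl
  | x :: w => by
    by_cases h : x = 0
    · simp only [ggsFun, if_pos h]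
      rw [ggsFun_inv e w]
    · simp only [ggsFun, if_neg h]
      cases w <;> simp [rotFun]

/-- The GGS generator `b` with defining vector `e`, as a tree automorphism. -/
def ggsB (e : ZMod p → ZMod p) : Equiv.Perm (List (ZMod p)) :=
  ⟨ggsFun e, ggsFun (fun i => -(e i)), ggsFun_inv e, by
    intro w
    have h := ggsFun_inv (fun i => -(e i)) w
    simpa using h⟩

end GGS

/-- The GGS-group `G = ⟨a, b⟩` over the `p`-adic tree with defining vector `e`. -/
def ggsGroup (p : ℕ) (e : ZMod p → ZMod p) : Subgroup (Equiv.Perm (List (ZMod p))) :=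
  Subgroup.closure {rotPerm 1, ggsB e}

/-! ### The first Grigorchuk group -/

/-- The three directed generators `b, c, d` (for `k % 3 = 0, 1, 2` respectively) of the
first Grigorchuk group, defined by the mutual recursion
`b = (a, c)`, `c = (a, d)`, `d = (1, b)` (identifying `x_1` with `0` and `x_2` with `1`). -/
def griFun : ℕ → List (ZMod 2) → List (ZMod 2)
  | _, [] => []
  | k, x :: w => if x = 0 then (if k % 3 = 2 then x :: w else x :: rotFun 1 w)
                 else x :: griFun (k + 1) w

lemma griFun_invol : ∀ (w : List (ZMod 2)) (k : ℕ), griFun k (griFun k w) = w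
  | [], _ => rfl
  | x :: w, k => by
    by_cases h : x = 0
    · by_cases h3 : k % 3 = 2
      · simp [griFun, h, h3]
      · simp only [griFun, if_pos h, if_neg h3]
        cases w with
        | nil => rfl
        | cons y v =>
            have hy : y + 1 + 1 = y := by
              rw [add_assoc]
              simp [show (1 : ZMod 2) + 1 = 0 from rfl]
            simp [rotFun, hy]
    · simp only [griFun, if_neg h]
      rw [griFun_invol w (k + 1)]

/-- The generator `b` of the first Grigorchuk group, with sections `(a, c)`. -/
def griB : Equiv.Perm (List (ZMod 2)) :=
  ⟨griFun 0, griFun 0, fun w => griFun_invol w 0, fun w => griFun_invol w 0⟩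

/-- The generator `c` of the first Grigorchuk group, with sections `(a, d)`. -/
def griC : Equiv.Perm (List (ZMod 2)) :=
  ⟨griFun 1, griFun 1, fun w => griFun_invol w 1, fun w => griFun_invol w 1⟩

/-- The generator `d` of the first Grigorchuk group, with sections `(1, b)`. -/
def griD : Equiv.Perm (List (ZMod 2)) :=
  ⟨griFun 2, griFun 2, fun w => griFun_invol w 2, fun w => griFun_invol w 2⟩

/-- The first Grigorchuk group `𝒢 = ⟨a, b, c, d⟩` acting on the binary tree. -/
def grigorchukGroup : Subgroup (Equiv.Perm (List (ZMod 2))) :=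
  Subgroup.closure {rotPerm 1, griB, griC, griD}

end TreeFract

/-!
By fractality at `x`, every `g ∈ G` is the section at `x` of some `h ∈ G` fixing `x`.
The root label of `h` is a power of the `d`-cycle `σ` with a fixed point, hence trivial,
so `h` already fixes the whole first level.
-/

namespace TreeFract

section

variable {X : Type*}

theorem apply_append_singleton_eq_label [Finite X] {g : Equiv.Perm (List X)} (hg : g ∈ AutT X)
    (u : List X) (y : X) : g (u ++ [y]) = g u ++ [label g u y] := by
  have hchild : ∀ y, g (u ++ [y]) = g u ++ [labelFun g u y] := fun y => by
    obtain ⟨z, hz⟩ := hg.2 u y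
    simp [labelFun, hz]
  have hinj : Function.Injective (labelFun g u) := fun y y' h => by
    have : g (u ++ [y]) = g (u ++ [y']) := by rw [hchild y, hchild y', h]
    simpa using g.injective this
  rw [label, dif_pos (Finite.injective_iff_bijective.mp hinj)]
  exact hchild y

theorem apply_singleton_eq_label [Finite X] {g : Equiv.Perm (List X)} (hg : g ∈ AutT X) (y : X) :
    g [y] = [label g [] y] := by
  simpa [hg.1] using apply_append_singleton_eq_label hg [] y

theorem stV_singleton_le_stL_one [Fintype X] [DecidableEq X] {G : Subgroup (Equiv.Perm (List X))}
    (hG : G ≤ AutT X) {σ : Equiv.Perm X} (hσc : σ.IsCycle) (hσs : σ.support = Finset.univ)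
    (hlab : ∀ g ∈ G, ∃ k : ℕ, label g ([] : List X) = σ ^ k) (x : X) :
    stV G [x] ≤ stL G 1 := by
  rintro h ⟨hG_h, hx⟩
  obtain ⟨k, hk⟩ := hlab h hG_h
  have hσx : σ x ≠ x := Equiv.Perm.mem_support.mp (hσs ▸ Finset.mem_univ x)
  have hlabel_one : label h [] = 1 := by
    rw [hk, hσc.pow_eq_one_iff' hσx, ← hk]
    simpa [hx] using (apply_singleton_eq_label (hG hG_h) x).symm
  refine ⟨hG_h, fun u hu => ?_⟩
  obtain ⟨y, rfl⟩ := List.length_eq_one_iff.mp hu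
  rw [apply_singleton_eq_label (hG hG_h), hlabel_one, Equiv.Perm.one_apply]

theorem StronglyFractal.of_fractal {G : Subgroup (Equiv.Perm (List X))} (hss : SelfSimilar G)
    (hfr : Fractal G) (hst : ∀ x : X, stV G [x] ≤ stL G 1) : StronglyFractal G := by
  intro x
  refine subset_antisymm ?_ ?_
  · rintro _ ⟨h, hh, rfl⟩
    exact hss h hh.1 [x]
  · rw [← hfr [x]]
    exact Set.image_mono (hst x)

end

/-- If `G ≤ Aut T` is a self-similar fractal group all of whose
root labels are powers of a fixed `d`-cycle `σ` of `X`, then `G` is strongly fractal. -/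
theorem stronglyFractal_of_labels_powers_of_cycle (X : Type*) [Fintype X] [DecidableEq X]
    (G : Subgroup (Equiv.Perm (List X))) (hG : G ≤ AutT X)
    (hss : SelfSimilar G) (hfr : Fractal G)
    (σ : Equiv.Perm X) (hσc : σ.IsCycle) (hσs : σ.support = Finset.univ)
    (hlab : ∀ g ∈ G, ∃ k : ℕ, label g ([] : List X) = σ ^ k) :
    StronglyFractal G :=
  StronglyFractal.of_fractal hss hfr (stV_singleton_le_stL_one hG hσc hσs hlab)

end TreeFract
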